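/- arXiv:1201.1178 — 2 statements merged into one kernel-verified Lean document; each statement's English description precedes it below -/
import Mathlib

section
/- The asymptotic expansion of φ(ρ) = 1 - (ρ^K - ρ)/(ρ^{K+1} - 1) at ρ = 1 is φ(ρ) = 2/(K+1) + (1/6)·K(K-1)/(K+1)·(ρ-1)² + O((ρ-1)³); in particular φ''(1) = K(K-1)/(3(K+1)). -/
/-!
Clearing the common factor `ρ - 1` gives `φ(ρ) = (1 + ρ^K) / (1 + ρ + ⋯ + ρ^K)` near `ρ = 1`
(at `ρ = 1` included), a quotient `p / q` of polynomials with `q(1) ≠ 0`. If `T` is the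
second-order Taylor polynomial of `p / q` at `1`, then `p - T q` has a root of order three at `1`,
so it is divisible by `(X - 1)^3`, and `p / q - T = (p - T q) / q = O((ρ - 1)^3)`. The Taylor
coefficients follow from the quotient rule and the derivatives at `1` of `1 + X^K` and of the
geometric sum; in particular `φ'(1) = 0`.
-/

open Filter Asymptotics

/-- φ(ρ) = 1 - (ρ^K - ρ)/(ρ^{K+1} - 1), extended by continuity at ρ = 1 with value 2/(K+1). -/
noncomputable def phi (K : ℕ) (ρ : ℝ) : ℝ :=
  if ρ = 1 then 2 / (K + 1) else 1 - (ρ ^ K - ρ) / (ρ ^ (K + 1) - 1)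

open Polynomial Finset Topology

namespace Polynomial

theorem X_sub_C_pow_dvd_of_eval_iterate_derivative_eq_zero {R : Type*} [CommRing R] [IsDomain R]
    [CharZero R] {p : R[X]} {a : R} {n : ℕ} (h : ∀ m < n, (derivative^[m] p).eval a = 0) :
    (X - C a) ^ n ∣ p := by
  rcases eq_or_ne p 0 with rfl | hp
  · exact dvd_zero _
  rcases n with _ | n
  · simp
  rw [← le_rootMultiplicity_iff hp]
  exact lt_rootMultiplicity_of_isRoot_iterate_derivative_of_mem_nonZeroDivisors hp
    (fun m hm => h m (Nat.lt_succ_of_le hm))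
    (mem_nonZeroDivisors_of_ne_zero (mod_cast n.factorial_ne_zero))

-- Differentiate `(∑ i < n, X^i) * (X - 1) = X^n - 1` `k + 1` times and evaluate at `1`.
theorem eval_one_iterate_derivative_geom_sum {R : Type*} [CommRing R] (n k : ℕ) :
    (k + 1) * (derivative^[k] (∑ i ∈ range n, X ^ i : R[X])).eval 1 = n.descFactorial (k + 1) := by
  have h := congrArg (fun p => (derivative^[k + 1] p).eval 1) (geom_sum_mul (X : R[X]) n)
  simpa [mul_sub, iterate_derivative_sub, iterate_derivative_mul_X,
    iterate_derivative_X_pow_eq_natCast_mul, iterate_derivative_one k.succ_pos] using h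

theorem eval_one_derivative_geom_sum {R : Type*} [Field R] [CharZero R] (K : ℕ) :
    (derivative (∑ i ∈ range (K + 1), X ^ i : R[X])).eval 1 = (K + 1) * K / 2 := by
  have h := eval_one_iterate_derivative_geom_sum (R := R) (K + 1) 1
  rw [Function.iterate_one, Nat.cast_descFactorial_two] at h
  push_cast at h
  linear_combination h / 2

theorem eval_one_iterate_derivative_two_geom_sum {R : Type*} [Field R] [CharZero R] (K : ℕ) :
    (derivative^[2] (∑ i ∈ range (K + 1), X ^ i : R[X])).eval 1 = (K + 1) * K * (K - 1) / 3 := by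
  have h := eval_one_iterate_derivative_geom_sum (R := R) (K + 1) 2
  rw [Nat.succ_descFactorial_succ, Nat.cast_mul, Nat.cast_descFactorial_two] at h
  push_cast at h
  linear_combination h / 3

theorem eval_one_iterate_derivative_two_one_add_X_pow {R : Type*} [CommRing R] (K : ℕ) :
    (derivative^[2] (1 + X ^ K : R[X])).eval 1 = K * (K - 1) := by
  rw [iterate_map_add, iterate_derivative_one two_pos, iterate_derivative_X_pow_eq_natCast_mul,
    zero_add, eval_mul, eval_natCast, eval_pow, eval_X, one_pow, mul_one,
    Nat.cast_descFactorial_two]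

noncomputable def evalDiv (p q : ℝ[X]) (y : ℝ) : ℝ := p.eval y / q.eval y

section evalDiv

variable {p q : ℝ[X]} {x : ℝ}

theorem hasDerivAt_evalDiv (hq : q.eval x ≠ 0) :
    HasDerivAt (evalDiv p q) (evalDiv (derivative p * q - p * derivative q) (q ^ 2) x) x :=
  ((p.hasDerivAt x).div (q.hasDerivAt x) hq).congr_deriv (by simp [evalDiv])

theorem deriv_evalDiv (hq : q.eval x ≠ 0) :
    deriv (evalDiv p q) x =
      ((derivative p).eval x * q.eval x - p.eval x * (derivative q).eval x) / q.eval x ^ 2 := by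
  simp [(hasDerivAt_evalDiv hq).deriv, evalDiv]

theorem iteratedDeriv_two_evalDiv (hq : q.eval x ≠ 0) :
    iteratedDeriv 2 (evalDiv p q) x =
      ((derivative^[2] p).eval x * q.eval x ^ 2
        - 2 * (derivative p).eval x * (derivative q).eval x * q.eval x
        - p.eval x * (derivative^[2] q).eval x * q.eval x
        + 2 * p.eval x * (derivative q).eval x ^ 2) / q.eval x ^ 3 := by
  have hderiv :
      deriv (evalDiv p q) =ᶠ[𝓝 x] evalDiv (derivative p * q - p * derivative q) (q ^ 2) := by
    filter_upwards [q.continuousAt.eventually_ne hq] with y hy using (hasDerivAt_evalDiv hy).deriv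
  rw [iteratedDeriv_succ, iteratedDeriv_one, hderiv.deriv_eq,
    (hasDerivAt_evalDiv (by simpa using hq)).deriv]
  simp only [evalDiv, derivative_sub, derivative_mul, derivative_pow, Nat.cast_ofNat,
    Nat.add_one_sub_one, pow_one, eval_sub, eval_mul, eval_add, eval_pow, eval_C,
    Function.iterate_succ, Function.iterate_zero, Function.comp_apply, id_eq]
  field_simp
  ring

theorem isBigO_evalDiv_of_dvd {n : ℕ} (hp : (X - C x) ^ n ∣ p) (hq : q.eval x ≠ 0) :
    evalDiv p q =O[𝓝 x] fun y => (y - x) ^ n := by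
  obtain ⟨r, rfl⟩ := hp
  have hr : evalDiv r q =O[𝓝 x] fun _ => (1 : ℝ) :=
    (r.continuousAt.div q.continuousAt hq).tendsto.isBigO_one ℝ
  have hfun : evalDiv ((X - C x) ^ n * r) q = fun y => (y - x) ^ n * evalDiv r q y := by
    funext y
    simp [evalDiv, mul_div_assoc]
  simpa [hfun] using (isBigO_refl (fun y => (y - x) ^ n) _).mul hr

theorem isBigO_evalDiv_sub_taylor (hq : q.eval x ≠ 0) :
    (fun y => evalDiv p q y - (evalDiv p q x + deriv (evalDiv p q) x * (y - x) +
      iteratedDeriv 2 (evalDiv p q) x / 2 * (y - x) ^ 2)) =O[𝓝 x] fun y => (y - x) ^ 3 := by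
  set T : ℝ[X] := C (evalDiv p q x) + C (deriv (evalDiv p q) x) * (X - C x) +
    C (iteratedDeriv 2 (evalDiv p q) x / 2) * (X - C x) ^ 2 with hT
  have hdvd : (X - C x) ^ 3 ∣ p - T * q := by
    refine X_sub_C_pow_dvd_of_eval_iterate_derivative_eq_zero fun m hm => ?_
    rw [deriv_evalDiv hq, iteratedDeriv_two_evalDiv hq] at hT
    interval_cases m <;>
      simp only [hT, evalDiv, Function.iterate_succ, Function.iterate_zero, Function.comp_apply,
        id, derivative_add, derivative_sub, derivative_mul, derivative_C, derivative_X,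
        derivative_pow, eval_add, eval_sub, eval_mul, eval_C, eval_X, eval_pow, eval_one,
        eval_zero, sub_self, derivative_zero, derivative_one] <;>
      field_simp <;> ring
  refine (isBigO_evalDiv_of_dvd hdvd hq).congr' ?_ EventuallyEq.rfl
  filter_upwards [q.continuousAt.eventually_ne hq] with y hy
  simp only [evalDiv, eval_sub, eval_mul, eval_add, eval_C, eval_X, eval_pow, T]
  field_simp

end evalDiv

end Polynomial

theorem phi_eventuallyEq_evalDiv (K : ℕ) :
    phi K =ᶠ[𝓝 1] evalDiv (1 + X ^ K) (∑ i ∈ range (K + 1), X ^ i) := by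
  have hq : (∑ i ∈ range (K + 1), X ^ i : ℝ[X]).eval 1 ≠ 0 := by
    simp only [eval_finsetSum, eval_pow, eval_X, one_pow, sum_const, card_range]
    positivity
  filter_upwards [(Polynomial.continuousAt _).eventually_ne hq] with ρ hρ
  simp only [eval_finsetSum, eval_pow, eval_X] at hρ
  rw [phi, evalDiv]
  simp only [eval_add, eval_one, eval_pow, eval_X, eval_finsetSum]
  split_ifs with hρ1
  · subst hρ1
    norm_num
  · have hgeom : ρ ^ (K + 1) - 1 = (∑ i ∈ range (K + 1), ρ ^ i) * (ρ - 1) :=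
      (geom_sum_mul ρ _).symm
    have hsub : ρ - 1 ≠ 0 := sub_ne_zero.2 hρ1
    rw [hgeom]
    field_simp
    linear_combination -hgeom

theorem phi_expansion_at_one_general (K : ℕ) :
    (fun ρ : ℝ => phi K ρ -
        (2 / (K + 1) + 1 / 6 * (K * (K - 1) / (K + 1)) * (ρ - 1) ^ 2))
      =O[nhds 1] (fun ρ : ℝ => (ρ - 1) ^ 3) ∧
    iteratedDeriv 2 (phi K) 1 = K * (K - 1) / (3 * (K + 1)) := by
  set p : ℝ[X] := 1 + X ^ K
  set q : ℝ[X] := ∑ i ∈ range (K + 1), X ^ i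
  have hq0 : q.eval 1 = K + 1 := by simp [q]
  have hq : q.eval 1 ≠ 0 := by rw [hq0]; positivity
  have hp0 : p.eval 1 = 2 := by norm_num [p]
  have hp1 : (derivative p).eval 1 = K := by simp [p, derivative_X_pow]
  have h0 : evalDiv p q 1 = 2 / (K + 1) := by rw [evalDiv, hp0, hq0]
  have h1 : deriv (evalDiv p q) 1 = 0 := by
    rw [deriv_evalDiv hq, hp0, hp1, hq0, eval_one_derivative_geom_sum]
    field_simp
    ring
  have h2 : iteratedDeriv 2 (evalDiv p q) 1 = K * (K - 1) / (3 * (K + 1)) := by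
    rw [iteratedDeriv_two_evalDiv hq, hp0, hp1, hq0, eval_one_derivative_geom_sum,
      eval_one_iterate_derivative_two_geom_sum, eval_one_iterate_derivative_two_one_add_X_pow]
    field_simp
    ring
  have hphi := phi_eventuallyEq_evalDiv K
  refine ⟨?_, by rw [hphi.iteratedDeriv_eq, h2]⟩
  have htaylor := isBigO_evalDiv_sub_taylor (p := p) hq
  rw [h0, h1, h2] at htaylor
  refine htaylor.congr' ?_ EventuallyEq.rfl
  filter_upwards [hphi] with ρ hρ
  rw [hρ]
  field_simp
  ring

/-- Second-order expansion of φ at ρ = 1: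
φ(ρ) = 2/(K+1) + (1/6) K(K-1)/(K+1) (ρ-1)² + O((ρ-1)³), and φ''(1) = K(K-1)/(3(K+1)). -/
theorem phi_expansion_at_one (K : ℕ) (hK : 2 ≤ K) :
    (fun ρ : ℝ => phi K ρ -
        (2 / (K + 1) + 1 / 6 * (K * (K - 1) / (K + 1)) * (ρ - 1) ^ 2))
      =O[nhds 1] (fun ρ : ℝ => (ρ - 1) ^ 3) ∧
    iteratedDeriv 2 (phi K) 1 = K * (K - 1) / (3 * (K + 1)) :=
  phi_expansion_at_one_general K
end

section
/- Fix ρ ∈ (0,1], K ≥ 1, and r ∈ [0,1]. For x ∈ [0,1] define u_0(x) = 1, u_1(x) = x, and u_{k+1}(x) = ρ r(u_k(x)² − 1) + ρ(1−r)(u_k(x) − 1) + x for k ≥ 1. Then there exists a unique x ∈ [0,1] such that u_{K+1}(x) = 0 and u_k(x) ≥ 0 for all 1 ≤ k ≤ K; that is, the partial two-choice fixed point equation has a unique solution. -/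
/-- Partial two-choice fixed-point recurrence: u_0(x) = 1,
u_{k+1}(x) = ρ(r(u_k(x)² - 1) + (1-r)(u_k(x) - 1)) + x (so that u_1(x) = x). -/
noncomputable def u (ρ r x : ℝ) : ℕ → ℝ
  | 0 => 1
  | k + 1 => ρ * (r * ((u ρ r x k) ^ 2 - 1) + (1 - r) * (u ρ r x k - 1)) + x

lemma u_succ (ρ r x : ℝ) (k : ℕ) :
    u ρ r x (k + 1) = ρ * (r * ((u ρ r x k) ^ 2 - 1) + (1 - r) * (u ρ r x k - 1)) + x := rfl

lemma u_zero (ρ r x : ℝ) : u ρ r x 0 = 1 := rfl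

lemma u_one_pt (ρ r : ℝ) : ∀ k, u ρ r 1 k = 1 := by
  intro k; induction k with
  | zero => rfl
  | succ k ih => rw [u_succ, ih]; ring

lemma u_cont (ρ r : ℝ) : ∀ k, Continuous fun x => u ρ r x k := by
  intro k; induction k with
  | zero => simpa [u_zero] using continuous_const
  | succ k ih =>
    have : (fun x => u ρ r x (k+1)) =
        fun x => ρ * (r * ((u ρ r x k) ^ 2 - 1) + (1 - r) * (u ρ r x k - 1)) + x := rfl
    rw [this]; fun_prop

lemma u_mono (ρ r : ℝ) (hρ0 : 0 < ρ) (hr0 : 0 ≤ r) (hr1 : r ≤ 1)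
    {x y : ℝ} (hxy : x ≤ y) :
    ∀ k, (∀ j, j ≤ k → 0 ≤ u ρ r x j) →
      u ρ r x k ≤ u ρ r y k ∧ (1 ≤ k → u ρ r x k + (y - x) ≤ u ρ r y k) := by
  intro k
  induction k with
  | zero => exact fun _ => ⟨le_rfl, fun h => absurd h (by omega)⟩
  | succ k ih =>
    intro h
    have hxk : 0 ≤ u ρ r x k := h k (Nat.le_succ k)
    have hle : u ρ r x k ≤ u ρ r y k := (ih fun j hj => h j (hj.trans (Nat.le_succ k))).1
    have hyk : 0 ≤ u ρ r y k := hxk.trans hle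
    have e1 := u_succ ρ r x k
    have e2 := u_succ ρ r y k
    have key : u ρ r x (k+1) + (y - x) ≤ u ρ r y (k+1) := by
      nlinarith [mul_nonneg (mul_nonneg hρ0.le hr0)
          (mul_nonneg (sub_nonneg.2 hle) (add_nonneg hyk hxk)),
        mul_nonneg (mul_nonneg hρ0.le (by linarith : (0:ℝ) ≤ 1 - r)) (sub_nonneg.2 hle)]
    exact ⟨by linarith, fun _ => key⟩

lemma u_dec (ρ r : ℝ) (hρ0 : 0 < ρ) (hr0 : 0 ≤ r) (hr1 : r ≤ 1)
    {x : ℝ} (hx1 : x ≤ 1) :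
    ∀ k, (∀ j, j ≤ k → 0 ≤ u ρ r x j) → u ρ r x (k+1) ≤ u ρ r x k := by
  intro k
  induction k with
  | zero =>
    intro _
    have e := u_succ ρ r x 0
    have e0 : u ρ r x 0 = 1 := rfl
    rw [e, e0]; ring_nf; linarith
  | succ k ih =>
    intro h
    have h0 : 0 ≤ u ρ r x k := h k (by omega)
    have h1 : 0 ≤ u ρ r x (k+1) := h (k+1) le_rfl
    have ihk : u ρ r x (k+1) ≤ u ρ r x k := ih fun j hj => h j (by omega)
    have e1 := u_succ ρ r x (k+1)
    have e2 := u_succ ρ r x k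
    nlinarith [mul_nonneg (mul_nonneg hρ0.le hr0)
        (mul_nonneg (sub_nonneg.2 ihk) (add_nonneg h0 h1)),
      mul_nonneg (mul_nonneg hρ0.le (by linarith : (0:ℝ) ≤ 1 - r)) (sub_nonneg.2 ihk)]


/-- The partial two-choice fixed-point equation has a unique solution. -/
theorem partial_two_choice_fixed_point_unique (K : ℕ) (hK : 1 ≤ K)
    (ρ : ℝ) (hρ0 : 0 < ρ) (hρ1 : ρ ≤ 1)
    (r : ℝ) (hr0 : 0 ≤ r) (hr1 : r ≤ 1) :
    ∃! x : ℝ, x ∈ Set.Icc (0 : ℝ) 1 ∧ u ρ r x (K + 1) = 0 ∧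
      ∀ k, 1 ≤ k → k ≤ K → 0 ≤ u ρ r x k := by
  -- the set of x whose whole trajectory up to K+1 is nonnegative
  set A : Set ℝ := Set.Icc (0:ℝ) 1 ∩ ⋂ j : ℕ, {x | j ≤ K + 1 → 0 ≤ u ρ r x j} with hA
  have memA : ∀ x : ℝ, x ∈ A ↔ x ∈ Set.Icc (0:ℝ) 1 ∧ ∀ j, j ≤ K + 1 → 0 ≤ u ρ r x j := by
    intro x; simp [hA, Set.mem_iInter]
  have h1A : (1:ℝ) ∈ A := (memA 1).2 ⟨⟨zero_le_one, le_rfl⟩, fun j _ => by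
    rw [u_one_pt]; norm_num⟩
  have hne : A.Nonempty := ⟨1, h1A⟩
  have hbdd : BddBelow A := ⟨0, fun x hx => ((memA x).1 hx).1.1⟩
  have hclosed : IsClosed A := by
    refine isClosed_Icc.inter (isClosed_iInter fun j => ?_)
    by_cases hj : j ≤ K + 1
    · have : {x : ℝ | j ≤ K + 1 → 0 ≤ u ρ r x j} = {x : ℝ | 0 ≤ u ρ r x j} := by
        ext x; simp [hj]
      rw [this]
      exact isClosed_le continuous_const (u_cont ρ r j)
    · have : {x : ℝ | j ≤ K + 1 → 0 ≤ u ρ r x j} = Set.univ := by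
        ext x; simp [hj]
      rw [this]; exact isClosed_univ
  set c : ℝ := sInf A with hc
  have hmem : c ∈ A := hclosed.csInf_mem hne hbdd
  obtain ⟨hcIcc, hcnn⟩ := (memA c).1 hmem
  obtain ⟨hc0, hc1⟩ := hcIcc
  -- 0 is not in A
  have h0A : (0:ℝ) ∉ A := by
    intro h0
    have h2 : 0 ≤ u ρ r 0 2 := ((memA 0).1 h0).2 2 (by omega)
    have e1 : u ρ r 0 1 = 0 := by rw [u_succ, u_zero]; ring
    have e2 : u ρ r 0 2 = -ρ := by rw [u_succ, e1]; ring
    rw [e2] at h2; linarith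
  have hcpos : 0 < c := lt_of_le_of_ne hc0 (fun h => h0A (h ▸ hmem))
  -- some value in the trajectory at c hits zero
  have hexzero : ∃ j, j ≤ K + 1 ∧ u ρ r c j = 0 := by
    by_contra hcon
    push_neg at hcon
    have hpos : ∀ j ∈ Finset.range (K + 2), 0 < u ρ r c j := by
      intro j hj
      have hj' : j ≤ K + 1 := by simpa using Nat.lt_succ_iff.1 (Finset.mem_range.1 hj)
      exact lt_of_le_of_ne (hcnn j hj') (Ne.symm (hcon j hj'))
    have hev : ∀ᶠ y in nhds c, 0 < y ∧ ∀ j ∈ Finset.range (K + 2), 0 < u ρ r y j := by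
      refine (eventually_gt_nhds hcpos).and ?_
      rw [Filter.eventually_all_finset]
      intro j hj
      exact ((u_cont ρ r j).continuousAt).eventually (eventually_gt_nhds (hpos j hj))
    obtain ⟨ε, hε, hball⟩ := Metric.eventually_nhds_iff.mp hev
    have hdist : dist (c - ε / 2) c < ε := by
      rw [Real.dist_eq, show c - ε / 2 - c = -(ε / 2) by ring, abs_neg,
        abs_of_nonneg (by linarith)]
      linarith
    obtain ⟨hy0, hyall⟩ := hball hdist
    have hyA : (c - ε / 2) ∈ A := (memA _).2 ⟨⟨hy0.le, by linarith⟩,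
      fun j hj => (hyall j (Finset.mem_range.2 (by omega))).le⟩
    have : c ≤ c - ε / 2 := csInf_le hbdd hyA
    linarith
  obtain ⟨j, hjK, hj0⟩ := hexzero
  -- trajectory at c is nonincreasing, so u c (K+1) ≤ u c j = 0
  have hchain : ∀ d, j + d ≤ K + 1 → u ρ r c (j + d) ≤ u ρ r c j := by
    intro d
    induction d with
    | zero => intro _; exact le_rfl
    | succ d ih =>
      intro hd
      have hstep : u ρ r c (j + d + 1) ≤ u ρ r c (j + d) :=
        u_dec ρ r hρ0 hr0 hr1 hc1 (j + d) (fun i hi => hcnn i (by omega))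
      have := ih (by omega)
      calc u ρ r c (j + (d + 1)) = u ρ r c (j + d + 1) := by ring_nf
        _ ≤ u ρ r c (j + d) := hstep
        _ ≤ u ρ r c j := this
  have hK1 : u ρ r c (K + 1) = 0 := by
    have h1 : u ρ r c (K + 1) ≤ 0 := by
      have := hchain (K + 1 - j) (by omega)
      rw [show j + (K + 1 - j) = K + 1 by omega, hj0] at this
      exact this
    exact le_antisymm h1 (hcnn (K + 1) le_rfl)
  -- uniqueness: strict monotonicity among admissible points
  have key : ∀ a b : ℝ,
      (a ∈ Set.Icc (0:ℝ) 1 ∧ u ρ r a (K + 1) = 0 ∧ ∀ k, 1 ≤ k → k ≤ K → 0 ≤ u ρ r a k) →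
      (b ∈ Set.Icc (0:ℝ) 1 ∧ u ρ r b (K + 1) = 0 ∧ ∀ k, 1 ≤ k → k ≤ K → 0 ≤ u ρ r b k) →
      a ≤ b → b ≤ a := by
    rintro a b ⟨haI, haz, hann⟩ ⟨hbI, hbz, hbnn⟩ hab
    have hyp : ∀ i, i ≤ K + 1 → 0 ≤ u ρ r a i := by
      intro i hi
      rcases Nat.eq_zero_or_pos i with h | h
      · rw [h, u_zero]; norm_num
      · rcases eq_or_lt_of_le hi with h2 | h2
        · rw [h2, haz]
        · exact hann i h (by omega)
    have := (u_mono ρ r hρ0 hr0 hr1 hab (K + 1) hyp).2 (by omega)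
    rw [haz, hbz] at this
    linarith
  refine ⟨c, ⟨⟨hc0, hc1⟩, hK1, fun k hk1 hk2 => hcnn k (by omega)⟩, ?_⟩
  intro y hy
  have hcP : c ∈ Set.Icc (0:ℝ) 1 ∧ u ρ r c (K + 1) = 0 ∧
      ∀ k, 1 ≤ k → k ≤ K → 0 ≤ u ρ r c k := ⟨⟨hc0, hc1⟩, hK1, fun k hk1 hk2 => hcnn k (by omega)⟩
  rcases le_total y c with h | h
  · exact le_antisymm h (key y c hy hcP h)
  · exact le_antisymm (key c y hcP hy h) h
end
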